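/- Let T ∈ Λ₁^∨ with T ∉ ϖ·Λ₁^∨, let λ ∈ F^×, and let y ∈ GSpin(V₁). If the Fourier coefficient S_T(Φ)(m(λ,y)) = ∫_{V₁} ψ(B(T,x))·Φ(n(x)·m(λ,y)) dx is nonzero, then val(y) = 0 (i.e., y ∈ Clif(Λ₁) ∖ ϖ·Clif(Λ₁)), λ ∈ O_F, and y⁻¹·ι(T)·y ∈ ι(Λ₁^∨). -/

import Mathlib

/- Setup: F a nonarchimedean local field (axiomatized via a subring `O`, uniformizer `ϖ`,
   residue cardinality `q` and absolute value `abv`);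
   `E` is `F` or a quadratic étale `F`-algebra with norm form `QE`;
   `V₁ = H₂ ⟂ ⋯ ⟂ H_n ⟂ V_E` realized concretely as `(Fin m → F × F) × E`
   (each `F × F` a hyperbolic plane), and `V = F e₁ ⊕ V₁ ⊕ F f₁` realized as
   `(F × F) × ((Fin m → F × F) × E)`. -/

open CliffordAlgebra QuadraticMap MeasureTheory

noncomputable section

variable {F : Type*} [Field F] {E : Type*} [CommRing E] [Algebra F E]

/-- The hyperbolic plane quadratic form `Q (a, b) = a * b` on `F × F`. -/
def hypForm (F : Type*) [Field F] : QuadraticForm F (F × F) :=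
  QuadraticMap.linMulLin (LinearMap.fst F F F) (LinearMap.snd F F F)

variable (m : ℕ) (QE : QuadraticForm F E)

/-- The quadratic form on `V₁ = H₂ ⟂ ⋯ ⟂ H_n ⟂ V_E`. -/
def QOne : QuadraticForm F ((Fin m → F × F) × E) :=
  (QuadraticMap.pi fun _ : Fin m => hypForm F).prod QE

/-- The quadratic form on `V = F e₁ ⊕ V₁ ⊕ F f₁`. -/
def QBig : QuadraticForm F ((F × F) × ((Fin m → F × F) × E)) :=
  (hypForm F).prod (QOne m QE)

/-- The isometric inclusion `V₁ → V`. -/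
def inclIsom : QOne m QE →qᵢ QBig m QE where
  toLinearMap := LinearMap.inr F (F × F) ((Fin m → F × F) × E)
  map_app' := by
    intro x
    simp [QBig, QuadraticMap.prod_apply, hypForm]

/-- The induced map `Clif(V₁) → Clif(V)`. -/
def emb : CliffordAlgebra (QOne m QE) →ₐ[F] CliffordAlgebra (QBig m QE) :=
  CliffordAlgebra.map (inclIsom m QE)

/-- The isotropic vector `e₁` of `V`. -/
def eOne : (F × F) × ((Fin m → F × F) × E) := ((1, 0), 0)

/-- The isotropic vector `f₁` of `V`. -/
def fOne : (F × F) × ((Fin m → F × F) × E) := ((0, 1), 0)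

/-- `n(x) = 1 + ι(f₁) ι(x) ∈ Clif(V)` for `x ∈ V₁`. -/
def nmap (x : (Fin m → F × F) × E) : CliffordAlgebra (QBig m QE) :=
  1 + ι (QBig m QE) (fOne m) * ι (QBig m QE) ((0 : F × F), x)

/-- `m(λ, y) = (ι(e₁)ι(f₁) + λ ι(f₁)ι(e₁)) · y ∈ Clif(V)` for `y ∈ Clif(V₁)`. -/
def mmap (lam : F) (y : CliffordAlgebra (QOne m QE)) : CliffordAlgebra (QBig m QE) :=
  (ι (QBig m QE) (eOne m) * ι (QBig m QE) (fOne m)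
    + lam • (ι (QBig m QE) (fOne m) * ι (QBig m QE) (eOne m))) * emb m QE y

/-- The lattice `Λ₁ = O e₂ ⊕ ⋯ ⊕ O e_n ⊕ O_E ⊕ O f_n ⊕ ⋯ ⊕ O f₂ ⊆ V₁`, where
`O_E` is the maximal `O`-order (= integral closure of `O`) in `E`. -/
def lat1 (O : Subring F) : Set ((Fin m → F × F) × E) :=
  {p | (∀ i, (p.1 i).1 ∈ O ∧ (p.1 i).2 ∈ O) ∧ p.2 ∈ integralClosure ↥O E}

/-- `Clif(Λ₁)`: the `O`-subalgebra of `Clif(V₁)` generated by `ι(Λ₁)`, realized as the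
subring generated by `ι(Λ₁)` together with the scalars `O`. -/
def clifLat1 (O : Subring F) : Subring (CliffordAlgebra (QOne m QE)) :=
  Subring.closure (ι (QOne m QE) '' lat1 m O ∪ (algebraMap F _) '' O)

/-- The lattice `Λ = O e₁ ⊕ Λ₁ ⊕ O f₁ ⊆ V`. -/
def latV (O : Subring F) : Set ((F × F) × ((Fin m → F × F) × E)) :=
  {p | p.1.1 ∈ O ∧ p.1.2 ∈ O ∧ p.2 ∈ lat1 m O}

/-- `Clif(Λ)`: the `O`-subalgebra of `Clif(V)` generated by `ι(Λ)`. -/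
def clifLatV (O : Subring F) : Subring (CliffordAlgebra (QBig m QE)) :=
  Subring.closure (ι (QBig m QE) '' latV m O ∪ (algebraMap F _) '' O)

/-- The dual lattice `Λ₁^∨ = {v ∈ V₁ : B(v, Λ₁) ⊆ O}`. -/
def lat1dual (O : Subring F) : Set ((Fin m → F × F) × E) :=
  {v | ∀ w ∈ lat1 m (O : Subring F), QuadraticMap.polar (QOne m QE) v w ∈ O}

end

/-! `Clif(V)` acts on `Clif(V₁)²`, with `e₁, f₁` acting as matrix units, and this action preserves
`Clif(Λ₁)²`. Evaluating at `(1, 0)` and `(0, 1)` shows that for even `y`, `n(x) m(λ, y) ∈ Clif(Λ)`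
iff `y, λy ∈ Clif(Λ₁)` and `ι(x) y ∈ Clif(Λ₁)`. The Fourier coefficient is therefore the integral
of `ψ(B(T, ·))` over the lattice `S = {x : ι(x) y ∈ Clif(Λ₁)}`; being nonzero, translation
invariance forces `ψ(B(T, ·)) = 1` on `S`, and since `S` is an `O`-module, `B(T, S) ⊆ O`.
If `y ∈ ϖ Clif(Λ₁)` then `ϖ⁻¹ Λ₁ ⊆ S`, so `ϖ⁻¹ T ∈ Λ₁^∨`; hence `y` is primitive, which forces
`λ ∈ O` as `λ y` is integral. Finally conjugation by `y` is an isometry `c` of `V₁` with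
`ι(c⁻¹ v) y = y ι(v)`, so `c⁻¹ Λ₁ ⊆ S` and `B(c T, Λ₁) = B(T, c⁻¹ Λ₁) ⊆ O`. -/

theorem QuadraticMap.IsometryEquiv.polar_map {R M N P : Type*} [CommRing R] [AddCommGroup M]
    [AddCommGroup N] [AddCommGroup P] [Module R M] [Module R N] [Module R P]
    {Q₁ : QuadraticMap R M P} {Q₂ : QuadraticMap R N P} (c : Q₁.IsometryEquiv Q₂) (v w : M) :
    polar Q₂ (c v) (c w) = polar Q₁ v w := by
  simp only [polar, ← map_add, c.map_app]

theorem Units.conj_mul {M : Type*} [Monoid M] (u : Mˣ) (a b : M) :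
    ↑u⁻¹ * a * u * (↑u⁻¹ * b * u) = ↑u⁻¹ * (a * b) * u := by
  simp only [mul_assoc, Units.mul_inv_cancel_left]

namespace CliffordAlgebra

variable {F : Type*} [Field F] {M : Type*} [AddCommGroup M] [Module F M] (Q : QuadraticForm F M)

/- Over a field `0 - Q` comes from a bilinear form, so `changeForm` identifies `CliffordAlgebra Q`
linearly with the exterior algebra without assuming `Invertible (2 : F)`. -/
instance nontrivial_of_field : Nontrivial (CliffordAlgebra Q) := by
  obtain ⟨B, hB⟩ := LinearMap.BilinMap.toQuadraticMap_surjective (0 - Q)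
  refine ⟨1, 0, fun h => one_ne_zero (α := ExteriorAlgebra F M) ?_⟩
  simpa only [changeForm_one, map_zero] using congrArg (changeForm hB) h

theorem ι_injective_of_field : Function.Injective (ι Q) := by
  obtain ⟨B, hB⟩ := LinearMap.BilinMap.toQuadraticMap_surjective (0 - Q)
  intro v w h
  simpa only [changeForm_ι, ExteriorAlgebra.ι_inj] using congrArg (changeForm hB) h

theorem exists_isometryEquiv_of_conj_ι [FiniteDimensional F M] (y : (CliffordAlgebra Q)ˣ)
    (hy : ∀ v, ∃ w, (↑y⁻¹ : CliffordAlgebra Q) * ι Q v * y = ι Q w) :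
    ∃ c : Q.IsometryEquiv Q, ∀ v, (↑y⁻¹ : CliffordAlgebra Q) * ι Q v * y = ι Q (c v) := by
  choose c hc using hy
  have hι := ι_injective_of_field Q
  let cL : M →ₗ[F] M :=
    { toFun := c
      map_add' := fun v w => hι <| by
        rw [← hc, map_add, map_add, ← hc, ← hc, mul_add, add_mul]
      map_smul' := fun a v => hι <| by
        rw [← hc, map_smul, map_smul, ← hc, mul_smul_comm, smul_mul_assoc, RingHom.id_apply] }
  have hcL : Function.Injective cL := fun v w h => hι <| by
    have h' : ι Q (c v) = ι Q (c w) := congrArg (ι Q) h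
    rw [← hc, ← hc] at h'
    simpa only [mul_assoc, Units.mul_inv, mul_one, Units.mul_inv_cancel_left] using
      congrArg (fun a => (y : CliffordAlgebra Q) * a * ↑y⁻¹) h'
  refine ⟨⟨LinearEquiv.ofInjectiveEndo cL hcL, fun v => ?_⟩, hc⟩
  apply (algebraMap F (CliffordAlgebra Q)).injective
  change algebraMap F _ (Q (c v)) = _
  rw [← ι_sq_scalar, ← hc, Units.conj_mul, ι_sq_scalar, ← Algebra.commutes,
    mul_assoc, Units.inv_mul, mul_one]

/- `Clif(H ⊥ V)` acts on `Clif(V) × Clif(V)`: the hyperbolic pair `e, f` acts by the matrix units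
`[[0,1],[0,0]]`, `[[0,0],[1,0]]` and `x ∈ V` by `diag(ι x, -ι x)`. -/
def hyperbolicAction : (F × F) × M →ₗ[F] Module.End F (CliffordAlgebra Q × CliffordAlgebra Q) :=
  LinearMap.mk₂ F (fun v p => (ι Q v.2 * p.1 + v.1.1 • p.2, v.1.2 • p.1 - ι Q v.2 * p.2))
    (fun v w p => by
      simp only [Prod.fst_add, Prod.snd_add, map_add, add_mul, add_smul, Prod.mk_add_mk]
      congr 1 <;> abel)
    (fun a v p => by
      simp only [Prod.smul_fst, Prod.smul_snd, map_smul, smul_mul_assoc, smul_eq_mul, mul_smul,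
        Prod.smul_mk, smul_add, smul_sub])
    (fun v p p' => by
      simp only [Prod.fst_add, Prod.snd_add, mul_add, smul_add, Prod.mk_add_mk]
      congr 1 <;> abel)
    (fun a v p => by
      simp only [Prod.smul_fst, Prod.smul_snd, mul_smul_comm, smul_comm a, Prod.smul_mk,
        smul_add, smul_sub])

theorem hyperbolicAction_mul_self (v : (F × F) × M) :
    hyperbolicAction Q v * hyperbolicAction Q v
      = algebraMap F _ (((hypForm F).prod Q) v) := by
  refine LinearMap.ext fun p => Prod.ext ?_ ?_
  all_goals
    simp only [hyperbolicAction, Module.End.mul_apply, LinearMap.mk₂_apply,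
      Module.algebraMap_end_apply, QuadraticMap.prod_apply, hypForm,
      QuadraticMap.linMulLin_apply, LinearMap.fst_apply, LinearMap.snd_apply, Prod.smul_fst,
      Prod.smul_snd, Prod.fst_add, Prod.snd_add, mul_add, mul_sub, smul_add, smul_sub,
      ← mul_assoc, ι_sq_scalar, mul_smul_comm, smul_smul, add_smul, ← Algebra.smul_def]
    module

def hyperbolicRep :
    CliffordAlgebra ((hypForm F).prod Q) →ₐ[F]
      Module.End F (CliffordAlgebra Q × CliffordAlgebra Q) :=
  lift _ ⟨hyperbolicAction Q, hyperbolicAction_mul_self Q⟩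

theorem hyperbolicRep_ι (v : (F × F) × M) (p : CliffordAlgebra Q × CliffordAlgebra Q) :
    hyperbolicRep Q (ι _ v) p
      = (ι Q v.2 * p.1 + v.1.1 • p.2, v.1.2 • p.1 - ι Q v.2 * p.2) := by
  rw [hyperbolicRep, lift_ι_apply]
  rfl

theorem hyperbolicRep_map_inr (c : CliffordAlgebra Q) (p : CliffordAlgebra Q × CliffordAlgebra Q) :
    hyperbolicRep Q (map (QuadraticMap.Isometry.inr (hypForm F) Q) c) p
      = (c * p.1, involute c * p.2) := by
  induction c using CliffordAlgebra.induction generalizing p with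
  | algebraMap r => simp [Algebra.smul_def, Prod.mul_def]
  | ι v => simp [hyperbolicRep_ι]
  | mul a b ha hb => simp [ha, hb, mul_assoc]
  | add a b ha hb => simp [ha, hb, add_mul]

end CliffordAlgebra

section Lattices

variable {F : Type*} [Field F] {E : Type*} [CommRing E] [Algebra F E]
variable (m : ℕ) (QE : QuadraticForm F E) (O : Subring F)

def clifVRep :
    CliffordAlgebra (QBig m QE) →ₐ[F]
      Module.End F (CliffordAlgebra (QOne m QE) × CliffordAlgebra (QOne m QE)) :=
  hyperbolicRep (QOne m QE)

theorem clifVRep_ι (v : (F × F) × ((Fin m → F × F) × E))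
    (p : CliffordAlgebra (QOne m QE) × CliffordAlgebra (QOne m QE)) :
    clifVRep m QE (ι (QBig m QE) v) p
      = (ι _ v.2 * p.1 + v.1.1 • p.2, v.1.2 • p.1 - ι _ v.2 * p.2) :=
  hyperbolicRep_ι _ v p

theorem clifVRep_emb (c : CliffordAlgebra (QOne m QE))
    (p : CliffordAlgebra (QOne m QE) × CliffordAlgebra (QOne m QE)) :
    clifVRep m QE (emb m QE c) p = (c * p.1, involute c * p.2) :=
  hyperbolicRep_map_inr _ c p

theorem zero_mem_lat1 : (0 : (Fin m → F × F) × E) ∈ lat1 m O :=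
  ⟨fun _ => ⟨zero_mem O, zero_mem O⟩, zero_mem _⟩

theorem ι_mem_clifLat1 {v : (Fin m → F × F) × E} (hv : v ∈ lat1 m O) :
    ι (QOne m QE) v ∈ clifLat1 m QE O :=
  Subring.subset_closure (Or.inl ⟨v, hv, rfl⟩)

theorem smul_mem_clifLat1 {a : F} {c : CliffordAlgebra (QOne m QE)} (ha : a ∈ O)
    (hc : c ∈ clifLat1 m QE O) : a • c ∈ clifLat1 m QE O := by
  rw [Algebra.smul_def]
  exact mul_mem (Subring.subset_closure (Or.inr ⟨a, ha, rfl⟩)) hc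

theorem ι_mem_clifLatV {v : (F × F) × ((Fin m → F × F) × E)} (hv : v ∈ latV m O) :
    ι (QBig m QE) v ∈ clifLatV m QE O :=
  Subring.subset_closure (Or.inl ⟨v, hv, rfl⟩)

theorem emb_mem_clifLatV {c : CliffordAlgebra (QOne m QE)} (hc : c ∈ clifLat1 m QE O) :
    emb m QE c ∈ clifLatV m QE O := by
  induction hc using Subring.closure_induction with
  | mem c hc =>
    rcases hc with ⟨v, hv, rfl⟩ | ⟨a, ha, rfl⟩
    · rw [emb, map_apply_ι]
      exact ι_mem_clifLatV m QE O ⟨zero_mem O, zero_mem O, hv⟩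
    · rw [AlgHom.commutes]
      exact Subring.subset_closure (Or.inr ⟨a, ha, rfl⟩)
  | zero => simp
  | one => simp
  | add _ _ _ _ ha hb => simpa using add_mem ha hb
  | neg _ _ ha => simpa using neg_mem ha
  | mul _ _ _ _ ha hb => simpa using mul_mem ha hb

theorem clifVRep_mem_prod {z : CliffordAlgebra (QBig m QE)} (hz : z ∈ clifLatV m QE O)
    {p : CliffordAlgebra (QOne m QE) × CliffordAlgebra (QOne m QE)}
    (hp : p ∈ (clifLat1 m QE O).prod (clifLat1 m QE O)) :
    clifVRep m QE z p ∈ (clifLat1 m QE O).prod (clifLat1 m QE O) := by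
  induction hz using Subring.closure_induction generalizing p with
  | mem z hz =>
    obtain ⟨hp₁, hp₂⟩ := Subring.mem_prod.mp hp
    rcases hz with ⟨v, ⟨ha, hb, hv⟩, rfl⟩ | ⟨a, ha, rfl⟩
    · rw [clifVRep_ι]
      exact Subring.mem_prod.mpr
        ⟨add_mem (mul_mem (ι_mem_clifLat1 m QE O hv) hp₁) (smul_mem_clifLat1 m QE O ha hp₂),
          sub_mem (smul_mem_clifLat1 m QE O hb hp₁) (mul_mem (ι_mem_clifLat1 m QE O hv) hp₂)⟩
    · rw [AlgHom.commutes, Module.algebraMap_end_apply]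
      exact Subring.mem_prod.mpr
        ⟨smul_mem_clifLat1 m QE O ha hp₁, smul_mem_clifLat1 m QE O ha hp₂⟩
  | zero => simp
  | one => simpa using hp
  | add _ _ _ _ ha hb => simpa using add_mem (ha hp) (hb hp)
  | neg _ _ ha => simpa using neg_mem (ha hp)
  | mul _ _ _ _ ha hb => simpa using ha (hb hp)

end Lattices

section FourierSupport

variable {F : Type*} [Field F] {E : Type*} [CommRing E] [Algebra F E]
variable (m : ℕ) (QE : QuadraticForm F E) (O : Subring F)

theorem nmap_mul_mmap (lam : F) (y : CliffordAlgebra (QOne m QE)) (x : (Fin m → F × F) × E) :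
    nmap m QE x * mmap m QE lam y
      = ι _ (eOne m) * ι _ (fOne m) * emb m QE y
        + ι _ (fOne m) * ι _ (eOne m) * emb m QE (lam • y)
        + ι _ (fOne m) * emb m QE (ι _ x * y) := by
  have hff : ι (QBig m QE) (fOne m) * ι _ (fOne m) = 0 := by
    rw [ι_sq_scalar, show QBig m QE (fOne m) = 0 by simp [QBig, hypForm, fOne], map_zero]
  have hef : ι (QBig m QE) (eOne m) * ι _ (fOne m) + ι _ (fOne m) * ι _ (eOne m) = 1 := by
    rw [ι_mul_ι_add_swap, show QuadraticMap.polar (QBig m QE) (eOne m) (fOne m) = 1 by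
      simp [QuadraticMap.polar, QBig, hypForm, eOne, fOne], map_one]
  have hxe : ι (QBig m QE) ((0 : F × F), x) * ι _ (eOne m)
      = -(ι _ (eOne m) * ι _ ((0 : F × F), x)) :=
    ι_mul_ι_comm_of_isOrtho (by simp [QuadraticMap.IsOrtho, QBig, hypForm, eOne])
  have hxf : ι (QBig m QE) ((0 : F × F), x) * ι _ (fOne m)
      = -(ι _ (fOne m) * ι _ ((0 : F × F), x)) :=
    ι_mul_ι_comm_of_isOrtho (by simp [QuadraticMap.IsOrtho, QBig, hypForm, fOne])
  have hemb : emb m QE (ι _ x) = ι (QBig m QE) ((0 : F × F), x) := map_apply_ι _ x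
  rw [nmap, mmap, map_mul, map_smul, hemb]
  set e := ι (QBig m QE) (eOne m)
  set f := ι (QBig m QE) (fOne m)
  set X := ι (QBig m QE) ((0 : F × F), x)
  have hfxf : f * X * f = 0 := by
    rw [mul_assoc, hxf, mul_neg, ← mul_assoc, hff, zero_mul, neg_zero]
  have hfxef : f * X * e * f = f * X :=
    calc f * X * e * f = -(f * e * (X * f)) := by rw [mul_assoc f X e, hxe]; noncomm_ring
      _ = f * (e * f) * X := by rw [hxf]; noncomm_ring
      _ = f * X := by
        rw [show e * f = 1 - f * e by rw [← hef]; abel, mul_sub, mul_one, ← mul_assoc, hff]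
        noncomm_ring
  simp only [mul_add, add_mul, smul_mul_assoc, mul_smul_comm, ← mul_assoc, one_mul, hfxef, hfxf,
    add_zero]
  abel

def supportLattice (y : CliffordAlgebra (QOne m QE)) : AddSubgroup ((Fin m → F × F) × E) :=
  (clifLat1 m QE O).toAddSubgroup.comap
    ((LinearMap.mulRight F y ∘ₗ ι (QOne m QE)).toAddMonoidHom)

theorem mem_supportLattice {y : CliffordAlgebra (QOne m QE)} {x : (Fin m → F × F) × E} :
    x ∈ supportLattice m QE O y ↔ ι _ x * y ∈ clifLat1 m QE O :=
  Iff.rfl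

theorem smul_mem_supportLattice {y : CliffordAlgebra (QOne m QE)} {x : (Fin m → F × F) × E}
    {c : F} (hc : c ∈ O) (hx : x ∈ supportLattice m QE O y) :
    c • x ∈ supportLattice m QE O y := by
  rw [mem_supportLattice, map_smul, smul_mul_assoc]
  exact smul_mem_clifLat1 m QE O hc hx

/- Feeding `(1, 0)` and `(0, 1)` to the action of `n(x) m(λ, y)` on `Clif(V₁)²` reads off
`(y, ι x * y)` and `(0, λ y)`; as the action preserves `Clif(Λ₁)²`, these are integral. -/
theorem nmap_mul_mmap_mem_clifLatV_iff {lam : F} {y : CliffordAlgebra (QOne m QE)}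
    (hy : involute y = y) {x : (Fin m → F × F) × E} :
    nmap m QE x * mmap m QE lam y ∈ clifLatV m QE O ↔
      y ∈ clifLat1 m QE O ∧ lam • y ∈ clifLat1 m QE O ∧ x ∈ supportLattice m QE O y := by
  have hρ : ∀ p, clifVRep m QE (nmap m QE x * mmap m QE lam y) p
      = (y * p.1, lam • (y * p.2) + ι _ x * (y * p.1)) := by
    intro p
    simp [nmap_mul_mmap, clifVRep_ι, clifVRep_emb, eOne, fOne, hy]
  constructor
  · intro h
    have h₁ := clifVRep_mem_prod m QE O h (p := (1, 0))
      (Subring.mem_prod.mpr ⟨one_mem _, zero_mem _⟩)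
    have h₂ := clifVRep_mem_prod m QE O h (p := (0, 1))
      (Subring.mem_prod.mpr ⟨zero_mem _, one_mem _⟩)
    simp only [hρ, Subring.mem_prod, mul_one, mul_zero, smul_zero, add_zero, zero_add] at h₁ h₂
    exact ⟨h₁.1, h₂.2, h₁.2⟩
  · rintro ⟨hy₁, hy₂, hx⟩
    have he := ι_mem_clifLatV m QE O (v := eOne m) ⟨one_mem O, zero_mem O, zero_mem_lat1 m O⟩
    have hf := ι_mem_clifLatV m QE O (v := fOne m) ⟨zero_mem O, one_mem O, zero_mem_lat1 m O⟩
    rw [nmap_mul_mmap]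
    exact add_mem (add_mem (mul_mem (mul_mem he hf) (emb_mem_clifLatV m QE O hy₁))
      (mul_mem (mul_mem hf he) (emb_mem_clifLatV m QE O hy₂)))
      (mul_mem hf (emb_mem_clifLatV m QE O hx))

theorem indicator_clifLatV_nmap_mul_mmap {lam : F} {y : CliffordAlgebra (QOne m QE)}
    (hy : involute y = y) (hy₁ : y ∈ clifLat1 m QE O) (hy₂ : lam • y ∈ clifLat1 m QE O)
    (x : (Fin m → F × F) × E) :
    (clifLatV m QE O : Set (CliffordAlgebra (QBig m QE))).indicator (fun _ => (1 : ℂ))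
        (nmap m QE x * mmap m QE lam y)
      = (supportLattice m QE O y : Set ((Fin m → F × F) × E)).indicator (fun _ => 1) x := by
  classical
  simp only [Set.indicator_apply, SetLike.mem_coe, nmap_mul_mmap_mem_clifLatV_iff m QE O hy, hy₁,
    hy₂, true_and]

end FourierSupport

theorem AddChar.eq_one_of_integral_mul_indicator_ne_zero {V : Type*} [AddGroup V]
    [MeasurableSpace V] [MeasurableAdd V] (μ : Measure V) [μ.IsAddLeftInvariant]
    (χ : AddChar V ℂ) (S : AddSubgroup V)
    (h : ∫ x, χ x * (S : Set V).indicator (fun _ => (1 : ℂ)) x ∂μ ≠ 0) {v : V} (hv : v ∈ S) :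
    χ v = 1 := by
  have hshift : ∀ x, (S : Set V).indicator (fun _ => (1 : ℂ)) (v + x)
      = (S : Set V).indicator (fun _ => (1 : ℂ)) x := fun x => by
    classical
    simp only [Set.indicator_apply, SetLike.mem_coe, S.add_mem_cancel_left hv]
  have htrans := integral_add_left_eq_self (μ := μ)
    (fun x => χ x * (S : Set V).indicator (fun _ => (1 : ℂ)) x) v
  simp only [AddChar.map_add_eq_mul, hshift, mul_assoc, integral_const_mul] at htrans
  exact (mul_eq_right₀ h).mp htrans

section Valuation

variable {F : Type*} [Field F] {O : Subring F} {ϖ : F} {q : ℕ} {abv : AbsoluteValue F ℝ}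

theorem ne_zero_of_abv_eq_inv (hq : 1 < q) (habsϖ : abv ϖ = (q : ℝ)⁻¹) : ϖ ≠ 0 := by
  rintro rfl
  rw [map_zero, eq_comm, inv_eq_zero, Nat.cast_eq_zero] at habsϖ
  omega

/- Discreteness: `|t| > 1` forces `|t| ≥ q = |ϖ|⁻¹`. -/
theorem inv_mul_mem_of_notMem (hq : 1 < q) (hO : ∀ x : F, x ∈ O ↔ abv x ≤ 1)
    (habsϖ : abv ϖ = (q : ℝ)⁻¹) (hdisc : ∀ x : F, x ≠ 0 → ∃ k : ℤ, abv x = (q : ℝ) ^ k)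
    {t : F} (ht : t ∉ O) : (ϖ * t)⁻¹ ∈ O := by
  have hqR : (1 : ℝ) < q := by exact_mod_cast hq
  obtain ⟨k, hk⟩ := hdisc t fun h => ht (h ▸ zero_mem O)
  have hk1 : 1 ≤ k := by
    by_contra! hk0
    exact ht ((hO t).mpr (hk ▸ zpow_le_one_of_nonpos₀ hqR.le (by omega)))
  rw [hO, map_inv₀, map_mul, habsϖ, hk, ← zpow_neg_one (q : ℝ), ← zpow_add₀ (by positivity)]
  exact inv_le_one_of_one_le₀ (one_le_zpow₀ hqR.le (by omega))

theorem mem_of_forall_addChar_mul_eq_one (hq : 1 < q) (hO : ∀ x : F, x ∈ O ↔ abv x ≤ 1)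
    (habsϖ : abv ϖ = (q : ℝ)⁻¹) (hdisc : ∀ x : F, x ≠ 0 → ∃ k : ℤ, abv x = (q : ℝ) ^ k)
    {ψ : AddChar F ℂ} (hψ : ∃ x : F, ϖ * x ∈ O ∧ ψ x ≠ 1) {t : F}
    (ht : ∀ c ∈ O, ψ (c * t) = 1) : t ∈ O := by
  by_contra htO
  obtain ⟨x, hxO, hx⟩ := hψ
  have ht0 : t ≠ 0 := fun h => htO (h ▸ zero_mem O)
  have hϖ := ne_zero_of_abv_eq_inv hq habsϖ
  have := ht _ (mul_mem hxO (inv_mul_mem_of_notMem hq hO habsϖ hdisc htO))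
  rw [show ϖ * x * (ϖ * t)⁻¹ * t = x by field_simp] at this
  exact hx this

end Valuation

section Integrality

variable {F : Type*} [Field F] {E : Type*} [CommRing E] [Algebra F E]
variable (m : ℕ) (QE : QuadraticForm F E) (O : Subring F)

theorem exists_mem_lat1dual_eq_smul {ϖ : F} (hϖ : ϖ ≠ 0) {y : CliffordAlgebra (QOne m QE)}
    {T : (Fin m → F × F) × E}
    (hTS : ∀ x ∈ supportLattice m QE O y, QuadraticMap.polar (QOne m QE) T x ∈ O)
    (hy : ∃ z ∈ clifLat1 m QE O, y = ϖ • z) :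
    ∃ w ∈ lat1dual m QE O, T = ϖ • w := by
  obtain ⟨z, hz, rfl⟩ := hy
  refine ⟨ϖ⁻¹ • T, fun w hw => ?_, by rw [smul_smul, mul_inv_cancel₀ hϖ, one_smul]⟩
  have hwS : ϖ⁻¹ • w ∈ supportLattice m QE O (ϖ • z) := by
    rw [mem_supportLattice, map_smul, smul_mul_assoc, mul_smul_comm, smul_smul,
      inv_mul_cancel₀ hϖ, one_smul]
    exact mul_mem (ι_mem_clifLat1 m QE O hw) hz
  simpa only [QuadraticMap.polar_smul_left, QuadraticMap.polar_smul_right] using hTS _ hwS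

theorem mem_of_smul_mem_clifLat1 {ϖ : F} {q : ℕ} {abv : AbsoluteValue F ℝ} (hq : 1 < q)
    (hO : ∀ x : F, x ∈ O ↔ abv x ≤ 1) (habsϖ : abv ϖ = (q : ℝ)⁻¹)
    (hdisc : ∀ x : F, x ≠ 0 → ∃ k : ℤ, abv x = (q : ℝ) ^ k) {lam : F}
    {y : CliffordAlgebra (QOne m QE)} (hlam : lam • y ∈ clifLat1 m QE O)
    (hy : ¬ ∃ z ∈ clifLat1 m QE O, y = ϖ • z) : lam ∈ O := by
  by_contra hlamO
  have hlam0 : lam ≠ 0 := fun h => hlamO (h ▸ zero_mem O)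
  have hϖ := ne_zero_of_abv_eq_inv hq habsϖ
  refine hy ⟨(ϖ * lam)⁻¹ • lam • y,
    smul_mem_clifLat1 m QE O (inv_mul_mem_of_notMem hq hO habsϖ hdisc hlamO) hlam, ?_⟩
  rw [smul_smul, smul_smul, show ϖ * (ϖ * lam)⁻¹ * lam = 1 by field_simp, one_smul]

theorem exists_conj_ι_eq_ι_mem_lat1dual [Module.Finite F E] {y : (CliffordAlgebra (QOne m QE))ˣ}
    (hy : (y : CliffordAlgebra (QOne m QE)) ∈ clifLat1 m QE O)
    (hconj : ∀ v, ∃ w, (↑y⁻¹ : CliffordAlgebra (QOne m QE)) * ι (QOne m QE) v * ↑y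
      = ι (QOne m QE) w)
    {T : (Fin m → F × F) × E}
    (hTS : ∀ x ∈ supportLattice m QE O y, QuadraticMap.polar (QOne m QE) T x ∈ O) :
    ∃ T' ∈ lat1dual m QE O,
      (↑y⁻¹ : CliffordAlgebra (QOne m QE)) * ι (QOne m QE) T * ↑y = ι (QOne m QE) T' := by
  obtain ⟨c, hc⟩ := exists_isometryEquiv_of_conj_ι _ y hconj
  refine ⟨c T, fun v hv => ?_, hc T⟩
  have hcomm : ι (QOne m QE) (c.symm v) * ↑y = ↑y * ι (QOne m QE) v :=
    calc ι (QOne m QE) (c.symm v) * ↑y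
        = ↑y * (↑y⁻¹ * ι (QOne m QE) (c.symm v) * ↑y) := by
          simp only [mul_assoc, Units.mul_inv_cancel_left]
      _ = ↑y * ι (QOne m QE) v := by rw [hc, c.apply_symm_apply]
  have hmem : c.symm v ∈ supportLattice m QE O y := by
    rw [mem_supportLattice, hcomm]
    exact mul_mem hy (ι_mem_clifLat1 m QE O hv)
  rw [← c.apply_symm_apply v, c.polar_map]
  exact hTS _ hmem

end Integrality

theorem statement7_general
    {F : Type*} [Field F] {E : Type*} [CommRing E] [Algebra F E] [Module.Finite F E]
    -- F is a nonarchimedean local field: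
    (O : Subring F) (ϖ : F) (q : ℕ) (abv : AbsoluteValue F ℝ)
    (hq : 1 < q)
    (hO : ∀ x : F, x ∈ O ↔ abv x ≤ 1)
    (habsϖ : abv ϖ = (q : ℝ)⁻¹)
    (hdisc : ∀ x : F, x ≠ 0 → ∃ k : ℤ, abv x = (q : ℝ) ^ k)
    -- E is F or a quadratic étale F-algebra, and QE is its norm form:
    (QE : QuadraticForm F E)
    (m : ℕ)
    -- the Haar measure on V₁, normalized so that μ(Λ₁) = 1:
    [MeasurableSpace ((Fin m → F × F) × E)] [MeasurableAdd ((Fin m → F × F) × E)]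
    (μ : Measure ((Fin m → F × F) × E)) [μ.IsAddLeftInvariant]
    -- ψ is an additive character of F, trivial on O and nontrivial on ϖ⁻¹·O:
    (ψ : AddChar F ℂ)
    (hψ2 : ∃ x : F, ϖ * x ∈ O ∧ ψ x ≠ 1)
    -- T ∈ Λ₁^∨ ∖ ϖ·Λ₁^∨:
    (T : (Fin m → F × F) × E)
    (hT' : ¬ ∃ w ∈ lat1dual m QE O, T = ϖ • w)
    -- λ ∈ F^×:
    (lam : F)
    -- y ∈ GSpin(V₁), with similitude ν(y) = νy:
    (y : (CliffordAlgebra (QOne m QE))ˣ)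
    (hyev : (↑y : CliffordAlgebra (QOne m QE)) ∈ CliffordAlgebra.evenOdd (QOne m QE) 0)
    (hconj : ∀ v : (Fin m → F × F) × E, ∃ w : (Fin m → F × F) × E,
      (↑y⁻¹ : CliffordAlgebra (QOne m QE)) * CliffordAlgebra.ι (QOne m QE) v * ↑y
        = CliffordAlgebra.ι (QOne m QE) w)
    -- nonvanishing of the Fourier coefficient S_T(Φ)(m(λ, y)):
    (hFC : (∫ x : (Fin m → F × F) × E,
        ψ (QuadraticMap.polar (QOne m QE) T x)
          * Set.indicator (clifLatV m QE O : Set (CliffordAlgebra (QBig m QE)))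
              (fun _ => (1 : ℂ)) (nmap m QE x * mmap m QE lam ↑y) ∂μ) ≠ 0) :
    ((↑y : CliffordAlgebra (QOne m QE)) ∈ clifLat1 m QE O ∧
        ¬ ∃ z ∈ clifLat1 m QE O, (↑y : CliffordAlgebra (QOne m QE)) = ϖ • z) ∧
      lam ∈ O ∧
      ∃ T' ∈ lat1dual m QE O,
        (↑y⁻¹ : CliffordAlgebra (QOne m QE)) * CliffordAlgebra.ι (QOne m QE) T * ↑y
          = CliffordAlgebra.ι (QOne m QE) T' := by
  obtain ⟨x₀, hx₀⟩ : ∃ x, nmap m QE x * mmap m QE lam ↑y ∈ clifLatV m QE O := by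
    by_contra! h
    exact hFC (by simp [Set.indicator_of_notMem (h _)])
  have hyinv := involute_eq_of_mem_even hyev
  obtain ⟨hy, hlamy, -⟩ := (nmap_mul_mmap_mem_clifLatV_iff m QE O hyinv).mp hx₀
  simp only [indicator_clifLatV_nmap_mul_mmap m QE O hyinv hy hlamy] at hFC
  have hψS : ∀ x ∈ supportLattice m QE O y, ψ (QuadraticMap.polar (QOne m QE) T x) = 1 :=
    fun x hx => AddChar.eq_one_of_integral_mul_indicator_ne_zero μ
      (ψ.compAddMonoidHom (QuadraticMap.polarBilin (QOne m QE) T).toAddMonoidHom) _ hFC hx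
  have hTS : ∀ x ∈ supportLattice m QE O y, QuadraticMap.polar (QOne m QE) T x ∈ O :=
    fun x hx => mem_of_forall_addChar_mul_eq_one hq hO habsϖ hdisc hψ2 fun c hc => by
      rw [← smul_eq_mul, ← QuadraticMap.polar_smul_right]
      exact hψS _ (smul_mem_supportLattice m QE O hc hx)
  have hndvd : ¬ ∃ z ∈ clifLat1 m QE O, (↑y : CliffordAlgebra (QOne m QE)) = ϖ • z :=
    fun h => hT' (exists_mem_lat1dual_eq_smul m QE O (ne_zero_of_abv_eq_inv hq habsϖ) hTS h)
  exact ⟨⟨hy, hndvd⟩, mem_of_smul_mem_clifLat1 m QE O hq hO habsϖ hdisc hlamy hndvd,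
    exists_conj_ι_eq_ι_mem_lat1dual m QE O hy hconj hTS⟩

/-- Let `T ∈ Λ₁^∨ ∖ ϖ·Λ₁^∨`, `λ ∈ F^×`, `y ∈ GSpin(V₁)`. If the Fourier
coefficient `S_T(Φ)(m(λ,y)) = ∫_{V₁} ψ(B(T,x)) Φ(n(x) m(λ,y)) dx` is nonzero, then `val(y) = 0`
(i.e. `y ∈ Clif(Λ₁) ∖ ϖ·Clif(Λ₁)`), `λ ∈ O`, and `y⁻¹ ι(T) y ∈ ι(Λ₁^∨)`. -/
theorem statement7
    {F : Type*} [Field F] {E : Type*} [CommRing E] [Algebra F E] [Module.Finite F E]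
    -- F is a nonarchimedean local field:
    (O : Subring F) (ϖ : F) (q : ℕ) (abv : AbsoluteValue F ℝ)
    (hq : 1 < q)
    (hO : ∀ x : F, x ∈ O ↔ abv x ≤ 1)
    (hϖO : ϖ ∈ O)
    (habsϖ : abv ϖ = (q : ℝ)⁻¹)
    (hdisc : ∀ x : F, x ≠ 0 → ∃ k : ℤ, abv x = (q : ℝ) ^ k)
    (hres : Nat.card (↥O ⧸ Ideal.span {(⟨ϖ, hϖO⟩ : ↥O)}) = q)
    -- E is F or a quadratic étale F-algebra, and QE is its norm form:
    (hE : Module.finrank F E = 1 ∨ (Module.finrank F E = 2 ∧ Algebra.IsSeparable F E))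
    (QE : QuadraticForm F E) (hQE : ∀ t : E, QE t = Algebra.norm F t)
    (m : ℕ)
    -- the Haar measure on V₁, normalized so that μ(Λ₁) = 1:
    [MeasurableSpace ((Fin m → F × F) × E)] [MeasurableAdd ((Fin m → F × F) × E)]
    (μ : Measure ((Fin m → F × F) × E)) [μ.IsAddLeftInvariant]
    (hμ : μ (lat1 m O) = 1)
    -- ψ is an additive character of F, trivial on O and nontrivial on ϖ⁻¹·O:
    (ψ : AddChar F ℂ)
    (hψ1 : ∀ x : F, x ∈ O → ψ x = 1)
    (hψ2 : ∃ x : F, ϖ * x ∈ O ∧ ψ x ≠ 1)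
    -- T ∈ Λ₁^∨ ∖ ϖ·Λ₁^∨:
    (T : (Fin m → F × F) × E)
    (hT : T ∈ lat1dual m QE O)
    (hT' : ¬ ∃ w ∈ lat1dual m QE O, T = ϖ • w)
    -- λ ∈ F^×:
    (lam : F) (hlam : lam ≠ 0)
    -- y ∈ GSpin(V₁), with similitude ν(y) = νy:
    (y : (CliffordAlgebra (QOne m QE))ˣ)
    (hyev : (↑y : CliffordAlgebra (QOne m QE)) ∈ CliffordAlgebra.evenOdd (QOne m QE) 0)
    (νy : F) (hνy : νy ≠ 0)
    (hν : CliffordAlgebra.reverse (Q := QOne m QE) ↑y * ↑y = algebraMap F _ νy)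
    (hconj : ∀ v : (Fin m → F × F) × E, ∃ w : (Fin m → F × F) × E,
      (↑y⁻¹ : CliffordAlgebra (QOne m QE)) * CliffordAlgebra.ι (QOne m QE) v * ↑y
        = CliffordAlgebra.ι (QOne m QE) w)
    -- nonvanishing of the Fourier coefficient S_T(Φ)(m(λ, y)):
    (hFC : (∫ x : (Fin m → F × F) × E,
        ψ (QuadraticMap.polar (QOne m QE) T x)
          * Set.indicator (clifLatV m QE O : Set (CliffordAlgebra (QBig m QE)))
              (fun _ => (1 : ℂ)) (nmap m QE x * mmap m QE lam ↑y) ∂μ) ≠ 0) :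
    ((↑y : CliffordAlgebra (QOne m QE)) ∈ clifLat1 m QE O ∧
        ¬ ∃ z ∈ clifLat1 m QE O, (↑y : CliffordAlgebra (QOne m QE)) = ϖ • z) ∧
      lam ∈ O ∧
      ∃ T' ∈ lat1dual m QE O,
        (↑y⁻¹ : CliffordAlgebra (QOne m QE)) * CliffordAlgebra.ι (QOne m QE) T * ↑y
          = CliffordAlgebra.ι (QOne m QE) T' :=
  statement7_general O ϖ q abv hq hO habsϖ hdisc QE m μ ψ hψ2 T hT' lam y hyev hconj hFC
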